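/- arXiv:2006.08189 — 4 statements merged into one kernel-verified Lean document; each statement's English description precedes it below -/
import Mathlib

section
/- If n ≥ 2 and p ≥ 16(c1 + 1)·log(n)/(3n) for a fixed constant c1 > 0, then the empirical stochastic matrix S is row stochastic (i.e., all entries of S are nonnegative and every row of S sums to 1) with probability at least 1 − n^{−c1}. -/
open MeasureTheory ProbabilityTheory Filter
open scoped ENNReal Topology

noncomputable section

/-- Bernoulli measure on `Bool` with success probability `q`. -/
def bern (q : ℝ) : Measure Bool :=
  ENNReal.ofReal q • Measure.dirac true + ENNReal.ofReal (1 - q) • Measure.dirac false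

/-- Sample space of the BTL tournament model: skill parameters `ω.1`, edge indicators of the
Erdős–Rényi graph `ω.2.1` (read off the entries `(i,j)` with `i < j`), and game outcomes
`ω.2.2` (`ω.2.2 ((i,j), m) = true` iff `j` beats `i` in game `m`, for `i < j`). -/
abbrev BTLSpace (n k : ℕ) : Type :=
  (Fin n → ℝ) × ((Fin n × Fin n) → Bool) × (((Fin n × Fin n) × Fin k) → Bool)

/-- Joint law of the BTL model: the skills are i.i.d. with density `f`, independently each
edge is present with probability `p`, and conditionally on the skills `β` each game on an
edge `(i,j)` is won by `j` with probability `β j / (β i + β j)`, independently. -/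
def btlMeasure (n k : ℕ) (p : ℝ) (f : ℝ → ℝ) : Measure (BTLSpace n k) :=
  (Measure.pi fun _ : Fin n => volume.withDensity fun x => ENNReal.ofReal (f x)).bind fun β =>
    (Measure.dirac β).prod
      ((Measure.pi fun _ : Fin n × Fin n => bern p).prod
        (Measure.pi fun e : (Fin n × Fin n) × Fin k => bern (β e.1.2 / (β e.1.1 + β e.1.2))))

/-- The observation matrix `Z` (as a function `Fin n → Fin n → ℝ`). -/
def obs (n k : ℕ) (ω : BTLSpace n k) : Fin n → Fin n → ℝ := fun i j =>
  if i = j then 0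
  else if i < j then
    (if ω.2.1 (i, j) then (∑ m : Fin k, if ω.2.2 ((i, j), m) then (1 : ℝ) else 0) / k else 0)
  else
    (if ω.2.1 (j, i) then (∑ m : Fin k, if ω.2.2 ((j, i), m) then (0 : ℝ) else 1) / k else 0)

/-- The empirical stochastic matrix `S` built from the observation matrix `Z`. -/
def empS (n : ℕ) (p : ℝ) (Z : Fin n → Fin n → ℝ) : Fin n → Fin n → ℝ :=
  fun i j => if i = j then 1 - (∑ r, Z i r) / (2 * n * p) else Z i j / (2 * n * p)

/-- A square matrix is row stochastic if it has nonnegative entries and unit row sums. -/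
def IsRowStochastic {n : ℕ} (S : Fin n → Fin n → ℝ) : Prop :=
  (∀ i j, 0 ≤ S i j) ∧ ∀ i, ∑ j, S i j = 1

open scoped Classical in
/-- The rank centrality estimator: an invariant distribution of `S` in the probability
simplex if one exists (in particular whenever `S` is row stochastic), and an arbitrary
element of the simplex otherwise. -/
def rankCentrality (n : ℕ) (S : Fin n → Fin n → ℝ) : Fin n → ℝ :=
  if h : ∃ v, v ∈ stdSimplex ℝ (Fin n) ∧ Matrix.vecMul v (Matrix.of S) = v then h.choose
  else fun _ => (n : ℝ)⁻¹

/-- ℓ^∞ norm of a vector. -/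
def linfty {n : ℕ} (v : Fin n → ℝ) : ℝ := ⨆ i, |v i|

/-- ℓ^1 norm of a vector. -/
def l1 {n : ℕ} (v : Fin n → ℝ) : ℝ := ∑ i, |v i|

/-- Canonically scaled skill parameters `π(i) = α_i / (α_1 + ⋯ + α_n)`. -/
def piVec {n : ℕ} (β : Fin n → ℝ) : Fin n → ℝ := fun i => β i / ∑ j, β j

/-- Estimated skill parameters `α̂_i = π̂*(i) / ‖π̂*‖_∞`. -/
def alphaHat (n k : ℕ) (p : ℝ) (ω : BTLSpace n k) : Fin n → ℝ := fun i =>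
  rankCentrality n (empS n p (obs n k ω)) i / linfty (rankCentrality n (empS n p (obs n k ω)))

/-- The nonparametric class `𝒫(δ, ε, b, η, L1, B)` of skill densities. -/
def SkillClass (δ ε b η L1 B : ℝ) : Set (ℝ → ℝ) :=
  { f | Measurable f ∧ (∀ x, 0 ≤ f x) ∧
    IsProbabilityMeasure (volume.withDensity fun x => ENNReal.ofReal (f x)) ∧
    (∀ x, x ∉ Set.Icc δ 1 → f x = 0) ∧
    (∀ x ∈ Set.Icc δ 1, f x ≤ B) ∧
    ContDiffOn ℝ (⌈η⌉₊ - 1 : ℕ) f (Set.Icc δ 1) ∧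
    (∀ x ∈ Set.Icc δ 1, ∀ y ∈ Set.Icc δ 1,
      |iteratedDerivWithin (⌈η⌉₊ - 1) f (Set.Icc δ 1) x -
        iteratedDerivWithin (⌈η⌉₊ - 1) f (Set.Icc δ 1) y| ≤
          L1 * |x - y| ^ (η - ((⌈η⌉₊ - 1 : ℕ) : ℝ))) ∧
    (∀ x ∈ Set.Icc (1 - ε) 1, b ≤ f x) }

/-! On the event that every vertex of the Erdős–Rényi graph has degree below `2np`, each row of
`Z` sums to at most `2np` (an entry is an average of game outcomes on an edge, hence at most `1`),
so `S` is row stochastic. A degree is a sum of at most `n` independent Bernoulli(`p`) variables,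
and the Chernoff bound at `t = log 2` gives `P(deg ≥ 2np) ≤ e^{np} 4^{-np} = e^{-(2 log 2 - 1)np}`,
which is at most `n^{-(c1+1)}` because `16 (2 log 2 - 1) / 3 > 1`; a union bound over the `n`
vertices finishes. The skills play no role, since the graph is independent of them. -/
open Real

section Bernoulli

theorem bern_singleton (q : ℝ) (b : Bool) :
    bern q {b} = ENNReal.ofReal (if b then q else 1 - q) := by
  cases b <;> simp [bern]

instance (q : ℝ) : IsFiniteMeasure (bern q) :=
  ⟨by simp [bern]⟩

theorem isProbabilityMeasure_bern {q : ℝ} (h0 : 0 ≤ q) (h1 : q ≤ 1) :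
    IsProbabilityMeasure (bern q) :=
  ⟨by simp [bern, ← ENNReal.ofReal_add h0 (sub_nonneg.2 h1)]⟩

theorem one_le_bern_univ (q : ℝ) : 1 ≤ bern q Set.univ := by
  rcases le_total q 0 with hq | hq
  · calc (1 : ℝ≥0∞) ≤ ENNReal.ofReal (1 - q) := by rw [ENNReal.one_le_ofReal]; linarith
      _ ≤ bern q Set.univ := by simp [bern]
  · calc (1 : ℝ≥0∞) ≤ ENNReal.ofReal (q + max (1 - q) 0) := by
          rw [ENNReal.one_le_ofReal]; linarith [le_max_left (1 - q) 0]
      _ = bern q Set.univ := by simp [bern, ENNReal.ofReal_add hq (le_max_right _ _)]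

theorem integral_bern {q : ℝ} (h0 : 0 ≤ q) (h1 : q ≤ 1) (g : Bool → ℝ) :
    ∫ b, g b ∂bern q = q * g true + (1 - q) * g false := by
  simp [integral_fintype, Measure.real, bern_singleton, h0, h1]

end Bernoulli

section Chernoff

variable {ι : Type*} [Fintype ι] {p : ℝ}

theorem mgf_eval_pi_bern (hp0 : 0 ≤ p) (hp1 : p ≤ 1) (e : ι) (t : ℝ) :
    mgf (fun y : ι → Bool => if y e then (1 : ℝ) else 0) (Measure.pi fun _ => bern p) t =
      1 + p * (exp t - 1) := by
  have := isProbabilityMeasure_bern hp0 hp1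
  have hmap := (measurePreserving_eval (fun _ : ι => bern p) e).map_eq
  calc _ = mgf (fun b : Bool => if b then (1 : ℝ) else 0)
        ((Measure.pi fun _ => bern p).map (Function.eval e)) t :=
        (mgf_map (measurable_pi_apply e).aemeasurable
          (measurable_of_finite _).aestronglyMeasurable).symm
    _ = 1 + p * (exp t - 1) := by
      rw [hmap, mgf, integral_bern hp0 hp1]
      simp only [↓reduceIte, mul_one, Bool.false_eq_true, mul_zero, exp_zero]
      ring

theorem pi_bern_real_sum_ge_le (hp0 : 0 ≤ p) (hp1 : p ≤ 1) (s : Finset ι) (a : ℝ)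
    {t : ℝ} (ht : 0 ≤ t) :
    (Measure.pi fun _ : ι => bern p).real {y | a ≤ ∑ e ∈ s, if y e then (1 : ℝ) else 0} ≤
      exp (-t * a) * (1 + p * (exp t - 1)) ^ s.card := by
  have := isProbabilityMeasure_bern hp0 hp1
  set X : ι → (ι → Bool) → ℝ := fun e y => if y e then 1 else 0
  have hindep : iIndepFun X (Measure.pi fun _ => bern p) :=
    iIndepFun_pi (X := fun _ (b : Bool) => if b then (1 : ℝ) else 0)
      fun _ => (measurable_of_finite _).aemeasurable
  have hchernoff := measure_ge_le_exp_mul_mgf (X := ∑ e ∈ s, X e)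
    (μ := Measure.pi fun _ => bern p) a ht .of_finite
  rw [hindep.mgf_sum (fun _ => measurable_of_finite _),
    Finset.prod_congr rfl fun e _ => mgf_eval_pi_bern hp0 hp1 e t, Finset.prod_const] at hchernoff
  simpa [X] using hchernoff

end Chernoff

section Graph

variable {n : ℕ}

def edgeSlot (i r : Fin n) : Fin n × Fin n := if i < r then (i, r) else (r, i)

theorem edgeSlot_injOn (i : Fin n) : Set.InjOn (edgeSlot i) {r | r ≠ i} := by
  intro r hr s hs h
  simp only [edgeSlot] at h
  split_ifs at h <;> simp_all [Prod.ext_iff]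

def incidentSlots (i : Fin n) : Finset (Fin n × Fin n) :=
  (Finset.univ.erase i).image (edgeSlot i)

def degree (i : Fin n) (y : Fin n × Fin n → Bool) : ℝ :=
  ∑ e ∈ incidentSlots i, if y e then 1 else 0

theorem degree_eq_sum_erase (i : Fin n) (y : Fin n × Fin n → Bool) :
    degree i y = ∑ r ∈ Finset.univ.erase i, if y (edgeSlot i r) then 1 else 0 :=
  Finset.sum_image fun _ hr _ hs =>
    edgeSlot_injOn i (Finset.ne_of_mem_erase hr) (Finset.ne_of_mem_erase hs)

theorem card_incidentSlots_le (i : Fin n) : (incidentSlots i).card ≤ n :=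
  Finset.card_image_le.trans ((Finset.card_erase_le).trans (Finset.card_fin n).le)

end Graph

section Observation

variable {n k : ℕ}

theorem sum_div_card_le_one {g : Fin k → ℝ} (hg : ∀ m, g m ≤ 1) : (∑ m, g m) / k ≤ 1 :=
  div_le_one_of_le₀ ((Finset.sum_le_sum fun m _ => hg m).trans (by simp)) k.cast_nonneg

theorem obs_nonneg (ω : BTLSpace n k) (i j : Fin n) : 0 ≤ obs n k ω i j := by
  unfold obs
  split_ifs <;> first
    | exact le_rfl
    | exact div_nonneg (Finset.sum_nonneg fun m _ => by split <;> norm_num) k.cast_nonneg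

theorem obs_self (ω : BTLSpace n k) (i : Fin n) : obs n k ω i i = 0 := by
  simp [obs]

theorem obs_le_edgeSlot (ω : BTLSpace n k) (i j : Fin n) :
    obs n k ω i j ≤ if ω.2.1 (edgeSlot i j) then 1 else 0 := by
  unfold obs edgeSlot
  rcases lt_trichotomy i j with hij | rfl | hji
  · simp only [hij.ne, hij, if_false, if_true]
    split_ifs
    exacts [sum_div_card_le_one fun m => by split <;> norm_num, le_rfl]
  · simp only [if_true]; split_ifs <;> norm_num
  · simp only [hji.ne', hji.not_gt, if_false]
    split_ifs
    exacts [sum_div_card_le_one fun m => by split <;> norm_num, le_rfl]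

theorem sum_obs_le_degree (ω : BTLSpace n k) (i : Fin n) :
    ∑ r, obs n k ω i r ≤ degree i ω.2.1 := by
  rw [degree_eq_sum_erase, ← Finset.add_sum_erase _ _ (Finset.mem_univ i), obs_self, zero_add]
  exact Finset.sum_le_sum fun r _ => obs_le_edgeSlot ω i r

end Observation

theorem isRowStochastic_empS {n : ℕ} {p : ℝ} {Z : Fin n → Fin n → ℝ} (hc : 0 < 2 * n * p)
    (hZ : ∀ i j, 0 ≤ Z i j) (hdiag : ∀ i, Z i i = 0) (hrow : ∀ i, ∑ r, Z i r ≤ 2 * n * p) :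
    IsRowStochastic (empS n p Z) := by
  refine ⟨fun i j => ?_, fun i => ?_⟩
  · unfold empS
    split_ifs
    · linarith [(div_le_one hc).2 (hrow i)]
    · exact div_nonneg (hZ i j) hc.le
  · have hoff : ∀ j ∈ Finset.univ.erase i, empS n p Z i j = Z i j / (2 * n * p) :=
      fun j hj => if_neg (Finset.ne_of_mem_erase hj).symm
    rw [← Finset.add_sum_erase _ _ (Finset.mem_univ i), Finset.sum_congr rfl hoff,
      ← Finset.sum_div]
    simp only [empS, ↓reduceIte]
    rw [← Finset.add_sum_erase _ _ (Finset.mem_univ i), hdiag, zero_add, sub_add_cancel]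

theorem measurable_dirac_prod_of_countable {α X : Type*} [MeasurableSpace α] [MeasurableSpace X]
    [Countable X] [MeasurableSingletonClass X] {M : α → Measure X} [∀ a, SFinite (M a)]
    (hM : ∀ x, Measurable fun a => M a {x}) :
    Measurable fun a => (Measure.dirac a).prod (M a) := by
  refine Measure.measurable_of_measurable_coe _ fun s hs => ?_
  have hslice : ∀ a, (Measure.dirac a).prod (M a) s =
      ∑' x, {a | (a, x) ∈ s}.indicator (fun a => M a {x}) a := fun a => by
    rw [Measure.dirac_prod, Measure.map_apply measurable_prodMk_left hs,
      ← Measure.tsum_indicator_apply_singleton _ _ (measurable_prodMk_left hs)]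
    rfl
  simp_rw [hslice]
  exact Measurable.tsum fun x => (hM x).indicator (measurable_prodMk_right hs)

theorem measurable_btlKernel {n k : ℕ} (p : ℝ) :
    Measurable fun β : Fin n → ℝ => (Measure.dirac β).prod
      ((Measure.pi fun _ : Fin n × Fin n => bern p).prod
        (Measure.pi fun e : (Fin n × Fin n) × Fin k => bern (β e.1.2 / (β e.1.1 + β e.1.2)))) := by
  refine measurable_dirac_prod_of_countable fun ⟨y, z⟩ => ?_
  simp only [← Set.singleton_prod_singleton, Measure.prod_prod, ← Set.univ_pi_singleton,
    Measure.pi_pi, bern_singleton]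
  refine measurable_const.mul (Finset.measurable_prod _ fun e _ => ?_)
  refine ENNReal.measurable_ofReal.comp ?_
  have hq : Measurable fun β : Fin n → ℝ => β e.1.2 / (β e.1.1 + β e.1.2) := by fun_prop
  split_ifs
  exacts [hq, measurable_const.sub hq]

theorem pi_bern_le_btlMeasure {n k : ℕ} {p : ℝ} {f : ℝ → ℝ}
    [IsProbabilityMeasure (volume.withDensity fun x => ENNReal.ofReal (f x))]
    {A : Set (Fin n × Fin n → Bool)} (hA : MeasurableSet A) :
    Measure.pi (fun _ => bern p) A ≤ btlMeasure n k p f {ω | ω.2.1 ∈ A} := by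
  -- The game factors may have success probabilities outside `[0, 1]` (the skills are arbitrary
  -- reals), but every Bernoulli factor has total mass at least `1`.
  have hevent : {ω : BTLSpace n k | ω.2.1 ∈ A} = Set.univ ×ˢ (A ×ˢ Set.univ) := by
    ext; simp
  have hslice : ∀ β : Fin n → ℝ, Measure.pi (fun _ => bern p) A ≤
      (Measure.dirac β).prod ((Measure.pi fun _ : Fin n × Fin n => bern p).prod
        (Measure.pi fun e : (Fin n × Fin n) × Fin k =>
          bern (β e.1.2 / (β e.1.1 + β e.1.2)))) {ω | ω.2.1 ∈ A} := fun β => by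
    rw [hevent, Measure.prod_prod, Measure.prod_prod, measure_univ, one_mul, Measure.pi_univ]
    exact le_mul_of_one_le_right' (Finset.one_le_prod' fun _ _ => one_le_bern_univ _)
  rw [btlMeasure, Measure.bind_apply (by rw [hevent]; exact MeasurableSet.univ.prod (hA.prod .univ))
    (measurable_btlKernel p).aemeasurable]
  calc Measure.pi (fun _ => bern p) A
      = ∫⁻ _, Measure.pi (fun _ => bern p) A
          ∂Measure.pi fun _ : Fin n => volume.withDensity fun x => ENNReal.ofReal (f x) := by
        simp
    _ ≤ _ := lintegral_mono hslice

theorem pi_bern_real_degree_ge_le {n : ℕ} {p : ℝ} (hp0 : 0 ≤ p) (hp1 : p ≤ 1) (i : Fin n) :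
    (Measure.pi fun _ => bern p).real {y | 2 * n * p ≤ degree i y} ≤
      exp (-(2 * log 2 - 1) * (n * p)) := by
  calc _ ≤ exp (-log 2 * (2 * n * p)) *
        (1 + p * (exp (log 2) - 1)) ^ (incidentSlots i).card :=
        pi_bern_real_sum_ge_le hp0 hp1 _ _ (log_nonneg one_le_two)
    _ ≤ exp (-log 2 * (2 * n * p)) * exp p ^ n := by
        rw [exp_log two_pos]
        gcongr
        calc _ ≤ exp p ^ (incidentSlots i).card := by
              gcongr; linarith [add_one_le_exp p]
          _ ≤ exp p ^ n := pow_le_pow_right₀ (one_le_exp hp0) (card_incidentSlots_le i)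
    _ = exp (-(2 * log 2 - 1) * (n * p)) := by
        rw [← exp_nat_mul, ← exp_add]; ring_nf

theorem pi_bern_real_exists_degree_ge_le {n : ℕ} {p : ℝ} (hp0 : 0 ≤ p) (hp1 : p ≤ 1) :
    (Measure.pi fun _ => bern p).real {y | ∃ i : Fin n, 2 * n * p ≤ degree i y} ≤
      n * exp (-(2 * log 2 - 1) * (n * p)) := by
  have := isProbabilityMeasure_bern hp0 hp1
  rw [Set.ofPred_exists]
  calc _ ≤ ∑ i : Fin n, (Measure.pi fun _ => bern p).real {y | 2 * n * p ≤ degree i y} :=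
        measureReal_iUnion_fintype_le _
    _ ≤ ∑ _i : Fin n, exp (-(2 * log 2 - 1) * (n * p)) :=
        Finset.sum_le_sum fun i _ => pi_bern_real_degree_ge_le hp0 hp1 i
    _ = n * exp (-(2 * log 2 - 1) * (n * p)) := by simp

theorem mul_exp_neg_le_rpow_neg {x c q : ℝ} (hx : 1 ≤ x) (hc : -1 ≤ c)
    (hq : 16 * (c + 1) * log x / (3 * x) ≤ q) :
    x * exp (-(2 * log 2 - 1) * (x * q)) ≤ x ^ (-c) := by
  have hx0 : 0 < x := by linarith
  have hlog : 0 ≤ (c + 1) * log x := mul_nonneg (by linarith) (log_nonneg hx)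
  have hxq : 16 * ((c + 1) * log x) / 3 ≤ x * q := by
    rw [div_le_iff₀ (by positivity)] at hq
    nlinarith
  rw [rpow_def_of_pos hx0, ← exp_log hx0, ← exp_add, exp_log hx0]
  refine exp_le_exp.2 ?_
  nlinarith [log_two_gt_d9]

theorem empirical_matrix_row_stochastic_general (n k : ℕ) (hn : 2 ≤ n)
    (p : ℝ) (hp : p ∈ Set.Ioc (0 : ℝ) 1)
    (c1 : ℝ) (hc1 : 0 < c1)
    (hplarge : 16 * (c1 + 1) * Real.log n / (3 * n) ≤ p)
    (f : ℝ → ℝ)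
    (hfprob : IsProbabilityMeasure (volume.withDensity fun x => ENNReal.ofReal (f x))) :
    ENNReal.ofReal (1 - (n : ℝ) ^ (-c1)) ≤
      btlMeasure n k p f {ω | IsRowStochastic (empS n p (obs n k ω))} := by
  obtain ⟨hp0, hp1⟩ := hp
  have := isProbabilityMeasure_bern hp0.le hp1
  have hn1 : (1 : ℝ) ≤ n := by exact_mod_cast (by omega : 1 ≤ n)
  set good := {y : Fin n × Fin n → Bool | ∀ i, degree i y < 2 * n * p}
  have hgood : 1 - (n : ℝ) ^ (-c1) ≤ (Measure.pi fun _ => bern p).real good := by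
    have hbad : goodᶜ = {y | ∃ i : Fin n, 2 * n * p ≤ degree i y} := by ext; simp [good]
    have hsplit := probReal_add_probReal_compl (μ := Measure.pi fun _ => bern p) (s := good)
      .of_discrete
    rw [hbad] at hsplit
    linarith [pi_bern_real_exists_degree_ge_le (n := n) hp0.le hp1,
      mul_exp_neg_le_rpow_neg hn1 (by linarith) hplarge]
  calc ENNReal.ofReal (1 - (n : ℝ) ^ (-c1)) ≤ Measure.pi (fun _ => bern p) good :=
        ENNReal.ofReal_le_of_le_toReal hgood
    _ ≤ btlMeasure n k p f {ω | ω.2.1 ∈ good} := pi_bern_le_btlMeasure .of_discrete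
    _ ≤ _ := measure_mono fun ω hω => isRowStochastic_empS (by positivity) (obs_nonneg ω)
        (obs_self ω) fun i => (sum_obs_le_degree ω i).trans (hω i).le

/-- **The empirical matrix is row stochastic with high probability** (Proposition 1 of the
paper): if `n ≥ 2` and `p ≥ 16(c1+1)·log(n)/(3n)`, then under the BTL tournament model the
empirical stochastic matrix `S` is row stochastic with probability at least `1 − n^{−c1}`. -/
theorem empirical_matrix_row_stochastic (n k : ℕ) (hn : 2 ≤ n) (hk : 1 ≤ k)
    (δ p : ℝ) (hδ : δ ∈ Set.Ioo (0 : ℝ) 1) (hp : p ∈ Set.Ioc (0 : ℝ) 1)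
    (c1 : ℝ) (hc1 : 0 < c1)
    (hplarge : 16 * (c1 + 1) * Real.log n / (3 * n) ≤ p)
    (f : ℝ → ℝ) (hfm : Measurable f) (hf0 : ∀ x, 0 ≤ f x)
    (hfprob : IsProbabilityMeasure (volume.withDensity fun x => ENNReal.ofReal (f x)))
    (hfsupp : ∀ x, x ∉ Set.Icc δ 1 → f x = 0) :
    ENNReal.ofReal (1 - (n : ℝ) ^ (-c1)) ≤
      btlMeasure n k p f {ω | IsRowStochastic (empS n p (obs n k ω))} :=
  empirical_matrix_row_stochastic_general n k hn p hp c1 hc1 hplarge f hfprob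
end
end

section
/- Let n ≥ 1, δ ∈ (0,1), k ∈ ℕ, q > 0, and let G be a simple undirected graph on vertex set [n] with |G| edges. Let β = (β_1,…,β_n) and γ = (γ_1,…,γ_n) be vectors in [δ,1]^n such that |β_i − γ_i| ≤ (1−δ)/n^q for every i ∈ [n]. Then k · Σ_{{i,j} ∈ G, i < j} D( β_j/(β_i + β_j) ‖ γ_j/(γ_i + γ_j) ) ≤ ((1−δ)²/(4δ²)) · (2 + δ + 1/δ) · k·|G| / n^{2q}. -/
/-!
`log x ≤ x - 1` bounds the binary KL divergence by the χ²-divergence `(a - b)² / (b (1 - b))`.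
For `a = y/(x+y)`, `b = v/(u+v)` with weights perturbed by at most `ε`, one has
`|a - b| ≤ ε/(u+v)` and `b (1 - b) = uv/(u+v)²`, so each edge contributes at most
`ε²/(uv) ≤ ε²/δ²`; the stated constant is this bound relaxed by `δ + 1/δ ≥ 2`.
-/

/-- Binary Kullback–Leibler divergence `D(a‖b)`. -/
noncomputable def klBin (a b : ℝ) : ℝ :=
  a * Real.log (a / b) + (1 - a) * Real.log ((1 - a) / (1 - b))

open Finset

lemma mul_log_div_le_mul_div_sub_one {a b : ℝ} (ha : 0 ≤ a) (hb : 0 < b) :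
    a * Real.log (a / b) ≤ a * (a / b - 1) := by
  rcases ha.eq_or_lt with rfl | ha
  · simp
  · exact mul_le_mul_of_nonneg_left (Real.log_le_sub_one_of_pos (div_pos ha hb)) ha.le

lemma klBin_le_sq_div {a b : ℝ} (ha₀ : 0 ≤ a) (ha₁ : a ≤ 1) (hb₀ : 0 < b) (hb₁ : b < 1) :
    klBin a b ≤ (a - b) ^ 2 / (b * (1 - b)) := by
  calc klBin a b ≤ a * (a / b - 1) + (1 - a) * ((1 - a) / (1 - b) - 1) :=
        add_le_add (mul_log_div_le_mul_div_sub_one ha₀ hb₀)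
          (mul_log_div_le_mul_div_sub_one (by linarith) (by linarith))
    _ = (a - b) ^ 2 / (b * (1 - b)) := by
        field_simp [hb₀.ne', (sub_pos.2 hb₁).ne']
        ring

lemma abs_div_add_sub_div_add_le {x y u v ε : ℝ} (hx : 0 < x) (hy : 0 < y) (hu : 0 < u)
    (hv : 0 < v) (hxu : |x - u| ≤ ε) (hyv : |y - v| ≤ ε) :
    |y / (x + y) - v / (u + v)| ≤ ε / (u + v) := by
  have hxy : 0 < x + y := by linarith
  have huv : 0 < u + v := by linarith
  have hdiff : y / (x + y) - v / (u + v) = (y * (u - x) + x * (y - v)) / ((x + y) * (u + v)) := by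
    field_simp
    ring
  have hnum : |y * (u - x) + x * (y - v)| ≤ (x + y) * ε :=
    calc |y * (u - x) + x * (y - v)| ≤ y * |u - x| + x * |y - v| := by
          grw [abs_add_le, abs_mul, abs_mul, abs_of_pos hx, abs_of_pos hy]
      _ ≤ y * ε + x * ε := by
          rw [abs_sub_comm] at hxu
          gcongr
      _ = (x + y) * ε := by ring
  rw [hdiff, abs_div, abs_of_pos (mul_pos hxy huv), div_le_div_iff₀ (mul_pos hxy huv) huv]
  calc |y * (u - x) + x * (y - v)| * (u + v) ≤ (x + y) * ε * (u + v) := by gcongr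
    _ = ε * ((x + y) * (u + v)) := by ring

lemma klBin_div_add_le {x y u v ε : ℝ} (hx : 0 < x) (hy : 0 < y) (hu : 0 < u) (hv : 0 < v)
    (hxu : |x - u| ≤ ε) (hyv : |y - v| ≤ ε) :
    klBin (y / (x + y)) (v / (u + v)) ≤ ε ^ 2 / (u * v) := by
  have hxy : 0 < x + y := by linarith
  have huv : 0 < u + v := by linarith
  have hb_var : v / (u + v) * (1 - v / (u + v)) = u * v / (u + v) ^ 2 := by
    field_simp
    ring
  calc klBin (y / (x + y)) (v / (u + v))
      ≤ (y / (x + y) - v / (u + v)) ^ 2 / (v / (u + v) * (1 - v / (u + v))) :=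
        klBin_le_sq_div (by positivity) (div_le_one_of_le₀ (by linarith) hxy.le)
          (by positivity) ((div_lt_one huv).2 (by linarith))
    _ ≤ (ε / (u + v)) ^ 2 / (u * v / (u + v) ^ 2) := by
        rw [hb_var, ← sq_abs]
        gcongr
        exact abs_div_add_sub_div_add_le hx hy hu hv hxu hyv
    _ = ε ^ 2 / (u * v) := by
        field_simp

lemma four_le_two_add_add_one_div {δ : ℝ} (hδ : 0 < δ) : 4 ≤ 2 + δ + 1 / δ := by
  have hgap : 2 + δ + 1 / δ - 4 = (δ - 1) ^ 2 / δ := by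
    field_simp
    ring
  have : 0 ≤ (δ - 1) ^ 2 / δ := by positivity
  linarith

lemma card_filter_lt_adj_le_card_edgeFinset {V : Type*} [Fintype V] [LinearOrder V]
    (G : SimpleGraph V) [DecidableRel G.Adj] :
    #{e : V × V | e.1 < e.2 ∧ G.Adj e.1 e.2} ≤ #G.edgeFinset := by
  refine card_le_card_of_injOn (fun e ↦ s(e.1, e.2)) (fun e he ↦ ?_) fun e he f hf hef ↦ ?_
  · simpa using (mem_filter.1 he).2.2
  · have he := (mem_filter.1 he).2.1
    have hf := (mem_filter.1 hf).2.1
    rcases Sym2.eq_iff.1 hef with ⟨h₁, h₂⟩ | ⟨h₁, h₂⟩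
    · exact Prod.ext h₁ h₂
    · exact absurd (he.trans (h₂ ▸ h₁ ▸ hf)) (lt_irrefl _)

theorem covering_kl_bound_general (n : ℕ) (hn : 1 ≤ n) (δ q : ℝ)
    (hδ : δ ∈ Set.Ioo (0 : ℝ) 1) (k : ℕ)
    (G : SimpleGraph (Fin n)) [DecidableRel G.Adj]
    (β γ : Fin n → ℝ) (hβ : ∀ i, β i ∈ Set.Icc δ 1) (hγ : ∀ i, γ i ∈ Set.Icc δ 1)
    (hclose : ∀ i, |β i - γ i| ≤ (1 - δ) / (n : ℝ) ^ q) :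
    (k : ℝ) *
        ∑ e ∈ Finset.univ.filter (fun e : Fin n × Fin n => e.1 < e.2 ∧ G.Adj e.1 e.2),
          klBin (β e.2 / (β e.1 + β e.2)) (γ e.2 / (γ e.1 + γ e.2))
      ≤ (1 - δ) ^ 2 / (4 * δ ^ 2) * (2 + δ + 1 / δ) *
          ((k : ℝ) * G.edgeFinset.card) / (n : ℝ) ^ (2 * q) := by
  have hδ₀ := hδ.1
  have hn₀ : (0 : ℝ) < n := by exact_mod_cast hn
  have hpow : (n : ℝ) ^ (2 * q) = ((n : ℝ) ^ q) ^ 2 := by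
    rw [mul_comm, Real.rpow_mul hn₀.le, Real.rpow_two]
  set B := (1 - δ) ^ 2 / (4 * δ ^ 2) * (2 + δ + 1 / δ) / (n : ℝ) ^ (2 * q) with hB_def
  have hterm : ∀ i j, klBin (β j / (β i + β j)) (γ j / (γ i + γ j)) ≤ B := fun i j ↦
    calc klBin (β j / (β i + β j)) (γ j / (γ i + γ j))
        ≤ ((1 - δ) / (n : ℝ) ^ q) ^ 2 / (γ i * γ j) := by
          refine klBin_div_add_le ?_ ?_ ?_ ?_ (hclose i) (hclose j) <;>
            linarith [(hβ i).1, (hβ j).1, (hγ i).1, (hγ j).1]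
      _ ≤ ((1 - δ) / (n : ℝ) ^ q) ^ 2 / (δ * δ) := by
          gcongr <;> linarith [(hγ i).1, (hγ j).1]
      _ = (1 - δ) ^ 2 / (4 * δ ^ 2) * 4 / (n : ℝ) ^ (2 * q) := by
          rw [div_pow, hpow]
          field_simp
      _ ≤ B := by
          rw [hB_def]
          gcongr
          exact four_le_two_add_add_one_div hδ₀
  calc (k : ℝ) * ∑ e ∈ Finset.univ.filter (fun e : Fin n × Fin n => e.1 < e.2 ∧ G.Adj e.1 e.2),
          klBin (β e.2 / (β e.1 + β e.2)) (γ e.2 / (γ e.1 + γ e.2))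
      ≤ k * (#G.edgeFinset * B) := by
        grw [sum_le_card_nsmul _ _ B fun e _ ↦ hterm e.1 e.2, nsmul_eq_mul,
          card_filter_lt_adj_le_card_edgeFinset]
    _ = _ := by ring

/-- **The ε-covering bound** (Claim 1 of the paper): if the parameter vectors `β, γ ∈ [δ,1]^n`
are coordinate-wise within `(1−δ)/n^q` of each other, then the KL divergence between the
corresponding laws of the observations on a graph `G`, which equals
`k · Σ_{{i,j} ∈ G, i<j} D(β_j/(β_i+β_j) ‖ γ_j/(γ_i+γ_j))`, is at most
`((1−δ)²/(4δ²)) · (2 + δ + 1/δ) · k·|G| / n^{2q}`. -/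
theorem covering_kl_bound (n : ℕ) (hn : 1 ≤ n) (δ q : ℝ)
    (hδ : δ ∈ Set.Ioo (0 : ℝ) 1) (hq : 0 < q) (k : ℕ)
    (G : SimpleGraph (Fin n)) [DecidableRel G.Adj]
    (β γ : Fin n → ℝ) (hβ : ∀ i, β i ∈ Set.Icc δ 1) (hγ : ∀ i, γ i ∈ Set.Icc δ 1)
    (hclose : ∀ i, |β i - γ i| ≤ (1 - δ) / (n : ℝ) ^ q) :
    (k : ℝ) *
        ∑ e ∈ Finset.univ.filter (fun e : Fin n × Fin n => e.1 < e.2 ∧ G.Adj e.1 e.2),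
          klBin (β e.2 / (β e.1 + β e.2)) (γ e.2 / (γ e.1 + γ e.2))
      ≤ (1 - δ) ^ 2 / (4 * δ ^ 2) * (2 + δ + 1 / δ) *
          ((k : ℝ) * G.edgeFinset.card) / (n : ℝ) ^ (2 * q) :=
  covering_kl_bound_general n hn δ q hδ k G β γ hβ hγ hclose
end

section
/- For every δ ∈ (0,1), the maximum of the binary KL divergence D(a‖b) over all a, b ∈ [δ/(1+δ), 1/(1+δ)] equals D( 1/(1+δ) ‖ δ/(1+δ) ); in particular, D(a‖b) ≤ D( 1/(1+δ) ‖ δ/(1+δ) ) for all a, b in this interval. -/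
open Real Set

lemma mul_log_div_eq {a b : ℝ} (hb : b ≠ 0) : a * log (a / b) = a * log a - a * log b := by
  rcases eq_or_ne a 0 with rfl | ha
  · simp
  · rw [log_div ha hb, mul_sub]

lemma sub_le_mul_log_div {a b : ℝ} (ha : 0 ≤ a) (hb : 0 < b) : a - b ≤ a * log (a / b) := by
  rcases ha.eq_or_lt with rfl | ha
  · simpa using hb.le
  have hlog := log_le_sub_one_of_pos (div_pos hb ha)
  have hmul : a * (b / a - 1) = b - a := by field_simp
  rw [← inv_div, log_inv]
  linarith [mul_le_mul_of_nonneg_left hlog ha.le]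

lemma concaveOn_log_one_sub : ConcaveOn ℝ (Iio 1) fun x => log (1 - x) := by
  have h := strictConcaveOn_log_Ioi.concaveOn.comp_affineMap (AffineMap.lineMap (1 : ℝ) 0)
  have hfun : log ∘ AffineMap.lineMap (1 : ℝ) 0 = fun x => log (1 - x) := by
    ext; simp [AffineMap.lineMap_apply, neg_add_eq_sub]
  rw [hfun] at h
  exact h.subset (fun x hx => by simpa [AffineMap.lineMap_apply] using hx) (convex_Iio 1)

lemma le_max_corners_of_convexOn {f : ℝ → ℝ → ℝ} {L U a b : ℝ}
    (hfst : ∀ y ∈ Icc L U, ConvexOn ℝ (Icc L U) (f · y))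
    (hsnd : ∀ x ∈ Icc L U, ConvexOn ℝ (Icc L U) (f x ·))
    (ha : a ∈ Icc L U) (hb : b ∈ Icc L U) :
    f a b ≤ max (max (f L L) (f U L)) (max (f L U) (f U U)) := by
  have hLU : L ≤ U := ha.1.trans ha.2
  have hL : L ∈ Icc L U := left_mem_Icc.2 hLU
  have hU : U ∈ Icc L U := right_mem_Icc.2 hLU
  calc f a b ≤ max (f a L) (f a U) := (hsnd a ha).le_max_of_mem_Icc hL hU hb
    _ ≤ _ := max_le_max ((hfst L hL).le_max_of_mem_Icc hL hU ha)
        ((hfst U hU).le_max_of_mem_Icc hL hU ha)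

@[simp]
lemma klBin_self (a : ℝ) : klBin a a = 0 := by
  simp [klBin]

lemma klBin_one_sub_one_sub (a b : ℝ) : klBin (1 - a) (1 - b) = klBin a b := by
  simp only [klBin, sub_sub_cancel]
  ring

lemma klBin_nonneg {a b : ℝ} (ha : a ∈ Icc 0 1) (hb : b ∈ Ioo 0 1) : 0 ≤ klBin a b := by
  have h₁ := sub_le_mul_log_div ha.1 hb.1
  have h₂ := sub_le_mul_log_div (sub_nonneg.2 ha.2) (sub_pos.2 hb.2)
  unfold klBin
  linarith

lemma klBin_eq_neg_binEntropy_sub {a b : ℝ} (hb₀ : b ≠ 0) (hb₁ : b ≠ 1) :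
    klBin a b = -binEntropy a - (a * log b + (1 - a) * log (1 - b)) := by
  rw [klBin, mul_log_div_eq hb₀, mul_log_div_eq (sub_ne_zero.2 hb₁.symm), binEntropy,
    log_inv, log_inv]
  ring

lemma convexOn_klBin_left {b : ℝ} (hb₀ : b ≠ 0) (hb₁ : b ≠ 1) :
    ConvexOn ℝ (Icc 0 1) (klBin · b) := by
  have hlin : ConcaveOn ℝ (Icc 0 1) fun a : ℝ => a * log b + (1 - a) * log (1 - b) := by
    have h := (concaveOn_id (𝕜 := ℝ) convex_univ).comp_affineMap
      (AffineMap.lineMap (log (1 - b)) (log b))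
    refine (h.subset (subset_univ _) (convex_Icc 0 1)).congr fun a _ => ?_
    simp [AffineMap.lineMap_apply]
    ring
  exact (strictConcave_binEntropy.concaveOn.neg.sub hlin).congr
    fun a _ => (klBin_eq_neg_binEntropy_sub hb₀ hb₁).symm

lemma convexOn_klBin_right {a : ℝ} (ha : a ∈ Icc 0 1) :
    ConvexOn ℝ (Ioo 0 1) (klBin a ·) := by
  have hlog : ConcaveOn ℝ (Ioo 0 1) fun b => a * log b + (1 - a) * log (1 - b) :=
    ((strictConcaveOn_log_Ioi.concaveOn.subset Ioo_subset_Ioi_self (convex_Ioo 0 1)).smul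
      ha.1).add ((concaveOn_log_one_sub.subset Ioo_subset_Iio_self (convex_Ioo 0 1)).smul
      (sub_nonneg.2 ha.2))
  exact ((concaveOn_const _ (convex_Ioo 0 1)).neg.sub hlog).congr
    fun b hb => (klBin_eq_neg_binEntropy_sub hb.1.ne' hb.2.ne).symm

lemma klBin_le_max_corners {L U a b : ℝ} (hL : 0 < L) (hU : U < 1)
    (ha : a ∈ Icc L U) (hb : b ∈ Icc L U) :
    klBin a b ≤ max (max (klBin L L) (klBin U L)) (max (klBin L U) (klBin U U)) := by
  have hsub : Icc L U ⊆ Ioo 0 1 := Icc_subset_Ioo hL hU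
  refine le_max_corners_of_convexOn (fun y hy => ?_) (fun x hx => ?_) ha hb
  · exact (convexOn_klBin_left (hsub hy).1.ne' (hsub hy).2.ne).subset
      (hsub.trans Ioo_subset_Icc_self) (convex_Icc L U)
  · exact (convexOn_klBin_right (Ioo_subset_Icc_self (hsub hx))).subset hsub (convex_Icc L U)

/-- **Extremal value of the binary KL divergence on a symmetric interval**: for `δ ∈ (0,1)`,
the maximum of `D(a‖b)` over `a, b ∈ [δ/(1+δ), 1/(1+δ)]` is attained at
`a = 1/(1+δ)`, `b = δ/(1+δ)`. -/
theorem klBin_isGreatest (δ : ℝ) (hδ : δ ∈ Set.Ioo (0 : ℝ) 1) :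
    IsGreatest
      ((fun q : ℝ × ℝ => klBin q.1 q.2) ''
        (Set.Icc (δ / (1 + δ)) (1 / (1 + δ)) ×ˢ Set.Icc (δ / (1 + δ)) (1 / (1 + δ))))
      (klBin (1 / (1 + δ)) (δ / (1 + δ))) := by
  obtain ⟨hδ₀, hδ₁⟩ := hδ
  have hUL : 1 / (1 + δ) = 1 - δ / (1 + δ) := by field_simp; ring
  have hL : 0 < δ / (1 + δ) := by positivity
  have hLU : δ / (1 + δ) ≤ 1 / (1 + δ) := by gcongr
  have hU : 1 / (1 + δ) < 1 := by rw [div_lt_one (by positivity)]; linarith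
  set L := δ / (1 + δ)
  set U := 1 / (1 + δ)
  have hsymm : klBin L U = klBin U L := by
    rw [hUL, ← klBin_one_sub_one_sub, sub_sub_cancel]
  have hnonneg : 0 ≤ klBin U L := klBin_nonneg ⟨hL.le.trans hLU, hU.le⟩ ⟨hL, hLU.trans_lt hU⟩
  refine ⟨⟨(U, L), ⟨⟨hLU, le_rfl⟩, le_rfl, hLU⟩, rfl⟩, ?_⟩
  rintro _ ⟨⟨a, b⟩, ⟨ha, hb⟩, rfl⟩
  calc klBin a b ≤ max (max (klBin L L) (klBin U L)) (max (klBin L U) (klBin U U)) :=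
        klBin_le_max_corners hL hU ha hb
    _ = klBin U L := by simp [hsymm, hnonneg]
end

section
/- Let n ≥ 2, δ ∈ (0,1), let α_1,…,α_n be i.i.d. uniform on [δ,1], and let π̃ = (π(1),…,π(n−1)) where π(i) = α_i/(α_1+⋯+α_n). Then for every Borel set A ⊆ ℝ^{n−1}: P(π̃ ∈ A) ≤ (n^{n−1}/(1−δ)^n) · λ(A), where λ denotes the Lebesgue measure on ℝ^{n−1}. Equivalently, the density of π̃ with respect to Lebesgue measure is (essentially) bounded above by n^{n−1}/(1−δ)^n. -/
/-!
Under the hypotheses the vector `(α_i)` has law `(1 - δ)⁻ⁿ` times Lebesgue measure on the cube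
`[δ, 1]ⁿ`, on which `s = ∑ α_i` lies in `(0, n]`. The map `x ↦ (x_1, …, x_{n-1}, ∑ x_i)` is a shear,
hence preserves Lebesgue measure, and it sends `{π̃ ∈ A, 0 < s ≤ n}` onto the truncated cone
`{(u, s) | 0 < s ≤ n, u / s ∈ A}`. The slice of that cone at height `s` is `s • A`, of measure
`s^(n-1) λ(A)`, so the cone has measure `∫₀ⁿ s^(n-1) ds · λ(A) = n^(n-1) λ(A)`.
-/

open MeasureTheory ProbabilityTheory Set
open scoped ENNReal NNReal

theorem MeasureTheory.Measure.pi_smul_const {ι : Type*} [Fintype ι] {α : ι → Type*}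
    [∀ i, MeasurableSpace (α i)] (μ : ∀ i, Measure (α i)) [∀ i, SigmaFinite (μ i)]
    {c : ℝ≥0∞} (hc : c ≠ ∞) :
    Measure.pi (fun i => c • μ i) = c ^ Fintype.card ι • Measure.pi μ := by
  lift c to ℝ≥0 using hc
  simp only [← ENNReal.smul_def]
  refine Measure.pi_eq fun s hs => ?_
  simp [Finset.prod_mul_distrib]

theorem ProbabilityTheory.iIndepFun.map_eq_smul_volume_restrict_pi {Ω ι : Type*}
    [MeasurableSpace Ω] [Fintype ι] {P : Measure Ω} [IsProbabilityMeasure P] {X : ι → Ω → ℝ}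
    (hX : ∀ i, Measurable (X i)) (hindep : iIndepFun X P) {c : ℝ≥0∞} (hc : c ≠ ∞) {s : Set ℝ}
    (hlaw : ∀ i, P.map (X i) = c • volume.restrict s) :
    P.map (fun ω i => X i ω) = c ^ Fintype.card ι • volume.restrict (univ.pi fun _ => s) := by
  rw [(iIndepFun_iff_map_fun_eq_pi_map fun i => (hX i).aemeasurable).1 hindep, funext hlaw,
    Measure.pi_smul_const _ hc, ← Measure.restrict_pi_pi, ← volume_pi]

theorem sum_mem_Ioc_of_mem_pi_Icc {ι : Type*} [Fintype ι] [Nonempty ι] {a b : ℝ} (ha : 0 < a)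
    {x : ι → ℝ} (hx : x ∈ univ.pi fun _ => Icc a b) :
    ∑ i, x i ∈ Ioc 0 (Fintype.card ι * b) := by
  simp only [mem_univ_pi, mem_Icc] at hx
  refine ⟨Finset.sum_pos (fun i _ => ha.trans_le (hx i).1) Finset.univ_nonempty, ?_⟩
  simpa using Finset.sum_le_sum fun i (_ : i ∈ Finset.univ) => (hx i).2

theorem lintegral_Ioc_pow {r : ℝ} (hr : 0 ≤ r) (d : ℕ) :
    ∫⁻ s in Ioc 0 r, ENNReal.ofReal (s ^ d) = ENNReal.ofReal (r ^ (d + 1) / (d + 1)) := by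
  rw [← ofReal_integral_eq_lintegral_ofReal (continuous_pow d).integrableOn_Ioc
    (ae_restrict_of_forall_mem measurableSet_Ioc fun s hs => pow_nonneg hs.1.le d),
    ← intervalIntegral.integral_of_le hr, integral_pow]
  simp

theorem measurePreserving_init_sum (m : ℕ) :
    MeasurePreserving (fun x : Fin (m + 1) → ℝ => (Fin.init x, ∑ i, x i))
      volume (volume.prod volume) := by
  have hshear : MeasurePreserving (fun p : (Fin m → ℝ) × ℝ => (p.1, p.2 + ∑ j, p.1 j))
      (volume.prod volume) (volume.prod volume) :=
    (MeasurePreserving.id volume).skew_product (by fun_prop)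
      (ae_of_all _ fun u => map_add_right_eq_self volume _)
  have hsplit := Measure.measurePreserving_swap.comp
    (volume_preserving_piFinSuccAbove (fun _ : Fin (m + 1) => ℝ) (Fin.last m))
  refine (hshear.comp hsplit).congr (by fun_prop) (ae_of_all _ fun x => ?_)
  simp [Fin.sum_univ_castSucc, Fin.init, add_comm]

def truncatedCone {E : Type*} [SMul ℝ E] (A : Set E) (r : ℝ) : Set (E × ℝ) :=
  {p | p.2 ∈ Ioc 0 r ∧ p.2⁻¹ • p.1 ∈ A}

section TruncatedCone

variable {E : Type*} [NormedAddCommGroup E] [NormedSpace ℝ E] [MeasurableSpace E] [BorelSpace E]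
  [FiniteDimensional ℝ E]

theorem measurableSet_truncatedCone {A : Set E} (hA : MeasurableSet A) (r : ℝ) :
    MeasurableSet (truncatedCone A r) :=
  (measurable_snd measurableSet_Ioc).inter (hA.preimage (by fun_prop))

theorem addHaar_prod_volume_truncatedCone (μ : Measure E) [μ.IsAddHaarMeasure] {A : Set E}
    (hA : MeasurableSet A) {r : ℝ} (hr : 0 ≤ r) :
    μ.prod volume (truncatedCone A r)
      = ENNReal.ofReal (r ^ (Module.finrank ℝ E + 1) / (Module.finrank ℝ E + 1)) * μ A := by
  have hslice : ∀ s, μ ((fun u => (u, s)) ⁻¹' truncatedCone A r)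
      = (Ioc 0 r).indicator (fun s => ENNReal.ofReal (s ^ Module.finrank ℝ E) * μ A) s := by
    intro s
    by_cases hs : s ∈ Ioc 0 r
    · have hslice_eq : (fun u => (u, s)) ⁻¹' truncatedCone A r = (fun u => s⁻¹ • u) ⁻¹' A := by
        ext u; simp [truncatedCone, hs.1, hs.2]
      rw [hslice_eq, indicator_of_mem hs, Measure.addHaar_preimage_smul μ (inv_ne_zero hs.1.ne'),
        inv_pow, inv_inv, abs_of_pos (pow_pos hs.1 _)]
    · have hslice_eq : (fun u => (u, s)) ⁻¹' truncatedCone A r = ∅ := by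
        ext u; simp_all [truncatedCone]
      rw [hslice_eq, indicator_of_notMem hs, measure_empty]
  rw [Measure.prod_apply_symm (measurableSet_truncatedCone hA r)]
  simp_rw [hslice]
  rw [lintegral_indicator measurableSet_Ioc, lintegral_mul_const _ (by fun_prop),
    lintegral_Ioc_pow hr]

end TruncatedCone

/-- The paper's `π̃`, as a function of the unnormalised weights. -/
noncomputable def normalizedInit {m : ℕ} (x : Fin (m + 1) → ℝ) : Fin m → ℝ :=
  fun j => x j.castSucc / ∑ i, x i

theorem measurable_normalizedInit (m : ℕ) : Measurable (normalizedInit (m := m)) := by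
  unfold normalizedInit
  fun_prop

theorem volume_sum_mem_Ioc_normalizedInit_mem (m : ℕ) {A : Set (Fin m → ℝ)}
    (hA : MeasurableSet A) {r : ℝ} (hr : 0 ≤ r) :
    volume {x : Fin (m + 1) → ℝ | ∑ i, x i ∈ Ioc 0 r ∧ normalizedInit x ∈ A}
      = ENNReal.ofReal (r ^ (m + 1) / (m + 1)) * volume A := by
  have hcone := addHaar_prod_volume_truncatedCone (volume : Measure (Fin m → ℝ)) hA hr
  rw [Module.finrank_fin_fun] at hcone
  rw [← hcone, ← (measurePreserving_init_sum m).measure_preimage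
    (measurableSet_truncatedCone hA r).nullMeasurableSet]
  congr 1
  ext x
  simp only [truncatedCone, mem_preimage, mem_ofPred_eq]
  congr! 2
  funext j
  simp [normalizedInit, Fin.init, div_eq_inv_mul]

/-- **Bound on the density of the scaled skill parameters** (Lemma on the mode of the joint
PDF of `π̃`): if `α_1,…,α_n` are i.i.d. uniform on `[δ,1]` and
`π̃ = (π(1),…,π(n−1))` with `π(i) = α_i/(α_1+⋯+α_n)`, then the law of `π̃` is bounded by
`n^{n−1}/(1−δ)^n` times Lebesgue measure on `ℝ^{n−1}`. -/
theorem density_bound_scaled_skills (n : ℕ) (hn : 2 ≤ n) (δ : ℝ) (hδ : δ ∈ Set.Ioo (0 : ℝ) 1)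
    {Ω : Type} [MeasurableSpace Ω] (P : Measure Ω) [IsProbabilityMeasure P]
    (α : Fin n → Ω → ℝ) (hmeas : ∀ i, Measurable (α i))
    (hindep : iIndepFun α P)
    (hunif : ∀ i, Measure.map (α i) P =
      ENNReal.ofReal ((1 - δ)⁻¹) • volume.restrict (Set.Icc δ 1)) :
    ∀ A : Set (Fin (n - 1) → ℝ), MeasurableSet A →
      P {ω | (fun i : Fin (n - 1) => α (Fin.castLE (Nat.sub_le n 1) i) ω / ∑ j, α j ω) ∈ A}
        ≤ ENNReal.ofReal ((n : ℝ) ^ (n - 1) / (1 - δ) ^ n) * volume A := by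
  obtain ⟨m, rfl⟩ : ∃ m, n = m + 1 := ⟨n - 1, by omega⟩
  intro A hA
  have hlaw := hindep.map_eq_smul_volume_restrict_pi hmeas ENNReal.ofReal_ne_top hunif
  set c := ENNReal.ofReal ((1 - δ)⁻¹)
  have hG := measurable_normalizedInit m hA
  calc _ = P.map (fun ω i => α i ω) (normalizedInit ⁻¹' A) :=
        (Measure.map_apply (measurable_pi_lambda _ hmeas) hG).symm
    _ = c ^ (m + 1) * volume (normalizedInit ⁻¹' A ∩ univ.pi fun _ => Icc δ 1) := by
        rw [hlaw, Measure.smul_apply, smul_eq_mul, Measure.restrict_apply hG, Fintype.card_fin]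
        rfl
    _ ≤ c ^ (m + 1) * volume {x | ∑ i, x i ∈ Ioc 0 ((m : ℝ) + 1) ∧ normalizedInit x ∈ A} := by
        gcongr
        rintro x ⟨hxA, hx⟩
        exact ⟨by simpa using sum_mem_Ioc_of_mem_pi_Icc hδ.1 hx, hxA⟩
    _ = c ^ (m + 1) * (ENNReal.ofReal (((m : ℝ) + 1) ^ (m + 1) / (m + 1)) * volume A) :=
        congrArg _ (volume_sum_mem_Ioc_normalizedInit_mem m hA (by positivity))
    _ = _ := by
        have h1δ : 0 < 1 - δ := by linarith [hδ.2]
        rw [← mul_assoc]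
        congr 1
        rw [← ENNReal.ofReal_pow (by positivity), ← ENNReal.ofReal_mul (by positivity),
          Nat.add_sub_cancel, pow_succ ((m : ℝ) + 1), mul_div_cancel_right₀ _ (by positivity),
          inv_pow, div_eq_inv_mul]
        push_cast
        rfl
end
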